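/- Let S = (P, T, F, λ, M) be a workflow system with sink place o, and let t ∈ T. Construct S' by adding a fresh place p', adding the arc (p', t), and taking initial marking M ⊎ [p']. Then t always occurs in S (i.e., every execution of S contains t) if and only if there exists no occurrence sequence of S' that leads to the marking [p', o]. -/

import Mathlib

/-- A Petri net (system) over places `P` and transitions `T`: for each transition its
preset (input places), postset (output places), and a label. -/
structure PetriNet (P T : Type) where
  pre : T → Finset P
  post : T → Finset P
  lab : T → String

/-- A transition is enabled at marking `M` iff every input place holds at least one token. -/
def Enabled {P T : Type} (N : PetriNet P T) (M : Multiset P) (t : T) : Prop :=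
  ∀ p ∈ N.pre t, p ∈ M

/-- Firing `t` consumes one token from each input place and produces one on each output place. -/
def fire {P T : Type} [DecidableEq P] (N : PetriNet P T) (M : Multiset P) (t : T) :
    Multiset P :=
  M - (N.pre t).val + (N.post t).val

/-- `OccSeq N M σ M'`: `σ` is an occurrence sequence of `N` leading from marking `M`
to marking `M'`. -/
inductive OccSeq {P T : Type} [DecidableEq P] (N : PetriNet P T) :
    Multiset P → List T → Multiset P → Prop
  | nil (M : Multiset P) : OccSeq N M [] M
  | cons {M M' : Multiset P} {t : T} {ts : List T} :
      Enabled N M t → OccSeq N (fire N M t) ts M' → OccSeq N M (t :: ts) M'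

/-- The net `S'` of Lemma 4.10: a fresh place `p' = none` is added as an extra input
place of transition `t` (arc `(p', t)`), all other arcs are kept. -/
def extendAlwaysOccurs {P T : Type} [DecidableEq P] [DecidableEq T]
    (N : PetriNet P T) (t : T) : PetriNet (Option P) T where
  pre := fun u =>
    if u = t then insert none ((N.pre u).image some) else (N.pre u).image some
  post := fun u => (N.post u).image some
  lab := N.lab

/-!
The fresh place `p'` has no input arcs and its only output arc leads to `t`, so in `S'` the
number of tokens on `p'` drops by one exactly at each occurrence of `t`. Hence a sequence of `S'`
that starts and ends with one token on `p'` never fires `t`, and away from `t` the two nets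
behave identically on markings of the form `A ⊎ [p']`.
-/

section OccSeq

variable {P T : Type} [DecidableEq P] {N : PetriNet P T}

theorem OccSeq.nil_iff {M M' : Multiset P} : OccSeq N M [] M' ↔ M = M' := by
  refine ⟨fun h => ?_, fun h => h ▸ OccSeq.nil M⟩
  cases h
  rfl

theorem OccSeq.cons_iff {M M' : Multiset P} {u : T} {σ : List T} :
    OccSeq N M (u :: σ) M' ↔ Enabled N M u ∧ OccSeq N (fire N M u) σ M' := by
  refine ⟨fun h => ?_, fun h => OccSeq.cons h.1 h.2⟩
  cases h with
  | cons he hσ => exact ⟨he, hσ⟩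

theorem count_fire_add_of_notMem_post {M : Multiset P} {u : T} {p : P}
    (hp : p ∉ N.post u) (he : Enabled N M u) :
    (fire N M u).count p + (if p ∈ N.pre u then 1 else 0) = M.count p := by
  have hpre : (N.pre u).val.count p = if p ∈ N.pre u then 1 else 0 :=
    Multiset.count_eq_of_nodup (N.pre u).nodup
  have hpost : (N.post u).val.count p = 0 := Multiset.count_eq_zero.mpr hp
  simp only [fire, Multiset.count_add, Multiset.count_sub, hpre, hpost]
  by_cases hmem : p ∈ N.pre u
  · have := Multiset.count_pos.mpr (he p hmem)
    simp only [if_pos hmem]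
    omega
  · simp only [if_neg hmem]
    omega

theorem OccSeq.count_add_countP_eq {M M' : Multiset P} {σ : List T} {p : P}
    (hp : ∀ u, p ∉ N.post u) (h : OccSeq N M σ M') :
    M'.count p + σ.countP (fun u => p ∈ N.pre u) = M.count p := by
  induction h with
  | nil => simp
  | @cons M M' u σ he _ ih =>
    rw [← count_fire_add_of_notMem_post (hp u) he, ← ih, List.countP_cons]
    simp only [decide_eq_true_eq]
    omega

end OccSeq

section extendAlwaysOccurs

variable {P T : Type} [DecidableEq P] [DecidableEq T] (N : PetriNet P T) (t : T)

theorem extendAlwaysOccurs_post (u : T) :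
    ((extendAlwaysOccurs N t).post u).val = (N.post u).val.map some :=
  Finset.image_val_of_injOn (Option.some_injective P).injOn

theorem extendAlwaysOccurs_pre_of_ne {u : T} (hu : u ≠ t) :
    ((extendAlwaysOccurs N t).pre u).val = (N.pre u).val.map some := by
  simp only [extendAlwaysOccurs, if_neg hu]
  exact Finset.image_val_of_injOn (Option.some_injective P).injOn

theorem none_notMem_extendAlwaysOccurs_post (u : T) :
    none ∉ (extendAlwaysOccurs N t).post u := by
  simp [extendAlwaysOccurs]

theorem none_mem_extendAlwaysOccurs_pre : none ∈ (extendAlwaysOccurs N t).pre t := by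
  simp [extendAlwaysOccurs]

variable {N t}

theorem enabled_extendAlwaysOccurs_iff {A : Multiset P} {u : T} (hu : u ≠ t) :
    Enabled (extendAlwaysOccurs N t) (A.map some + {none}) u ↔ Enabled N A u := by
  simp [Enabled, extendAlwaysOccurs, hu]

theorem fire_extendAlwaysOccurs {A : Multiset P} {u : T} (hu : u ≠ t) :
    fire (extendAlwaysOccurs N t) (A.map some + {none}) u = (fire N A u).map some + {none} := by
  rw [fire, fire, extendAlwaysOccurs_pre_of_ne N t hu, extendAlwaysOccurs_post]
  ext x
  cases x with
  | none => simp
  | some p =>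
    simp [Multiset.count_map_eq_count' _ _ (Option.some_injective P)]

theorem occSeq_extendAlwaysOccurs_iff {A C : Multiset P} {σ : List T} (hσ : t ∉ σ) :
    OccSeq (extendAlwaysOccurs N t) (A.map some + {none}) σ (C.map some + {none}) ↔
      OccSeq N A σ C := by
  induction σ generalizing A with
  | nil =>
    simp only [OccSeq.nil_iff, add_left_inj]
    exact (Multiset.map_injective (Option.some_injective P)).eq_iff
  | cons u σ ih =>
    rw [List.mem_cons, not_or] at hσ
    have hu : u ≠ t := Ne.symm hσ.1
    rw [OccSeq.cons_iff, OccSeq.cons_iff, enabled_extendAlwaysOccurs_iff hu,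
      fire_extendAlwaysOccurs hu, ih hσ.2]

theorem notMem_of_occSeq_extendAlwaysOccurs {A : Multiset P} {B : Multiset (Option P)}
    {σ : List T} (h : OccSeq (extendAlwaysOccurs N t) (A.map some + {none}) σ B)
    (hB : B.count none = 1) : t ∉ σ := by
  intro ht
  have hcount := h.count_add_countP_eq (none_notMem_extendAlwaysOccurs_post N t)
  have hpos : 0 < σ.countP (fun u => none ∈ (extendAlwaysOccurs N t).pre u) :=
    List.countP_pos_iff.mpr ⟨t, ht, decide_eq_true (none_mem_extendAlwaysOccurs_pre N t)⟩
  have hinit : (A.map some + {none}).count none = 1 := by simp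
  omega

end extendAlwaysOccurs

/-- Lemma 4.10: `t` always occurs in the workflow system `S` (with initial marking `M`
and sink `o`) iff no occurrence sequence of `S'` (with initial marking `M ⊎ [p']`)
leads to the marking `[p', o]`. -/
theorem alwaysOccurs_transition_iff_no_reachability {P T : Type} [DecidableEq P]
    [DecidableEq T] (N : PetriNet P T) (M : Multiset P) (o : P) (t : T) :
    (∀ σ : List T, OccSeq N M σ {o} → t ∈ σ) ↔
    ¬ ∃ σ : List T,
        OccSeq (extendAlwaysOccurs N t) (M.map some + {none}) σ
          ({none, some o} : Multiset (Option P)) := by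
  have htarget : ({none, some o} : Multiset (Option P)) = ({o} : Multiset P).map some + {none} :=
    Multiset.cons_swap _ _ _
  constructor
  · rintro h ⟨σ, hσ⟩
    have ht : t ∉ σ := notMem_of_occSeq_extendAlwaysOccurs hσ (by simp)
    rw [htarget, occSeq_extendAlwaysOccurs_iff ht] at hσ
    exact ht (h σ hσ)
  · intro h σ hσ
    by_contra ht
    exact h ⟨σ, by rwa [htarget, occSeq_extendAlwaysOccurs_iff ht]⟩
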